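/- With d_ω and δ_ω as defined in the paper, for every T = (P,x), T' = (P',x') ∈ 𝒫_k × ℝⁿ one has e^{−n} d_ω(T,T') ≤ δ_ω(T,T') ≤ d_ω(T,T'), i.e., the chain metric δ_ω is equivalent to d_ω with constants depending only on n. -/

import Mathlib

open MvPolynomial

/-- Iterated partial derivative `D^α` of a multivariate polynomial. -/
noncomputable def mderiv {n : ℕ} (α : Fin n → ℕ) (P : MvPolynomial (Fin n) ℝ) :
    MvPolynomial (Fin n) ℝ :=
  (List.finRange n).foldl (fun Q i => (MvPolynomial.pderiv i)^[α i] Q) P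

/-- The finite set of multi-indices `β ∈ ℕⁿ` with `|β| ≤ m`. -/
def multiIndices (n m : ℕ) : Finset (Fin n → ℕ) :=
  (Fintype.piFinset fun _ : Fin n => Finset.range (m + 1)).filter fun β => (∑ i, β i) ≤ m

lemma multiIndices_nonempty (n m : ℕ) : (multiIndices n m).Nonempty :=
  ⟨fun _ => 0, by simp [multiIndices]⟩

/-- `ψ_m`: the inverse of `s ↦ s^m * ω s` on `[0,∞)`. -/
noncomputable def psiInv (ω : ℝ → ℝ) (m : ℕ) (t : ℝ) : ℝ :=
  Function.invFunOn (fun s => s ^ m * ω s) (Set.Ici 0) t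

/-- `φ_α` for a multi-index of order `a`: `ω ∘ ψ_{k-a}` if `a < k`, identity if `a = k`. -/
noncomputable def phiOm (ω : ℝ → ℝ) (k a : ℕ) (t : ℝ) : ℝ :=
  if a < k then ω (psiInv ω (k - a) t) else t

/-- The quantity `d_ω(T,T')` on the space of `k`-jets `𝒫_k × ℝⁿ`. -/
noncomputable def dOm (ω : ℝ → ℝ) {n : ℕ} (k : ℕ)
    (T T' : MvPolynomial (Fin n) ℝ × EuclideanSpace ℝ (Fin n)) : ℝ :=
  (multiIndices n k).sup' (multiIndices_nonempty n k) fun α =>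
    max (ω ‖T.2 - T'.2‖)
      (max (phiOm ω k (∑ i, α i)
              |MvPolynomial.eval (fun i => T.2 i) (mderiv α (T.1 - T'.1))|)
           (phiOm ω k (∑ i, α i)
              |MvPolynomial.eval (fun i => T'.2 i) (mderiv α (T.1 - T'.1))|))

/-- The chain ("geodesic") metric `δ_ω` generated by `d_ω`, where chains run through
jets whose polynomial components have degree at most `k`. -/
noncomputable def delOm (ω : ℝ → ℝ) {n : ℕ} (k : ℕ)
    (T T' : MvPolynomial (Fin n) ℝ × EuclideanSpace ℝ (Fin n)) : ℝ :=
  sInf { r | ∃ (m : ℕ) (c : ℕ → MvPolynomial (Fin n) ℝ × EuclideanSpace ℝ (Fin n)),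
    c 0 = T ∧ c m = T' ∧ (∀ i ≤ m, (c i).1.totalDegree ≤ k) ∧
    r = ∑ i ∈ Finset.range m, dOm ω k (c i) (c (i + 1)) }

/-- Dilation `λ ∘ (P,x) := (λP, x)` of a jet. -/
noncomputable def scaleJet {n : ℕ} (l : ℝ)
    (T : MvPolynomial (Fin n) ℝ × EuclideanSpace ℝ (Fin n)) :
    MvPolynomial (Fin n) ℝ × EuclideanSpace ℝ (Fin n) :=
  (l • T.1, T.2)

/-! ### Algebraic lemmas on `mderiv` -/

lemma pderiv_iterate_monomial {n : ℕ} (i : Fin n) (t : ℕ) (γ : Fin n →₀ ℕ) (c : ℝ) :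
    (⇑(pderiv i))^[t] (monomial γ c) =
      monomial (γ - Finsupp.single i t) (c * (γ i).descFactorial t) := by
  induction t with
  | zero => simp
  | succ t ih =>
    rw [Function.iterate_succ_apply', ih, pderiv_monomial]
    congr 1
    · rw [tsub_tsub, ← Finsupp.single_add]
    · rw [Finsupp.tsub_apply, Finsupp.single_eq_same, Nat.descFactorial_succ]
      push_cast
      ring

lemma foldl_monomial {n : ℕ} (α : Fin n → ℕ) :
    ∀ (l : List (Fin n)), l.Nodup → ∀ (γ : Fin n →₀ ℕ) (c : ℝ),
    l.foldl (fun Q i => (⇑(pderiv i))^[α i] Q) (monomial γ c)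
      = monomial (γ - ∑ i ∈ l.toFinset, Finsupp.single i (α i))
          (c * ∏ i ∈ l.toFinset, (γ i).descFactorial (α i)) := by
  intro l
  induction l with
  | nil => intro _ γ c; simp
  | cons i l ih =>
    intro hnd γ c
    have hi : i ∉ l := (List.nodup_cons.1 hnd).1
    have hil : i ∉ l.toFinset := by simpa using hi
    rw [List.foldl_cons, pderiv_iterate_monomial, ih (List.nodup_cons.1 hnd).2]
    congr 1
    · rw [List.toFinset_cons, Finset.sum_insert hil, tsub_tsub]
    · rw [List.toFinset_cons, Finset.prod_insert hil]
      have : ∀ j ∈ l.toFinset, ((γ - Finsupp.single i (α i)) j).descFactorial (α j)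
          = (γ j).descFactorial (α j) := by
        intro j hj
        have hji : j ≠ i := by rintro rfl; exact hil hj
        rw [Finsupp.tsub_apply, Finsupp.single_apply, if_neg (Ne.symm hji).elim]
        · simp
      rw [Finset.prod_congr rfl this]
      push_cast
      ring

lemma mderiv_monomial {n : ℕ} (α : Fin n → ℕ) (γ : Fin n →₀ ℕ) (c : ℝ) :
    mderiv α (monomial γ c)
      = monomial (γ - ∑ i, Finsupp.single i (α i))
          (c * ∏ i, (γ i).descFactorial (α i)) := by
  rw [mderiv, foldl_monomial α _ (List.nodup_finRange n)]
  simp [List.toFinset_finRange]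

lemma pderiv_iterate_add {n : ℕ} (i : Fin n) (t : ℕ) (P Q : MvPolynomial (Fin n) ℝ) :
    (⇑(pderiv i))^[t] (P + Q) = (⇑(pderiv i))^[t] P + (⇑(pderiv i))^[t] Q := by
  induction t generalizing P Q with
  | zero => rfl
  | succ t ih => rw [Function.iterate_succ_apply', Function.iterate_succ_apply',
      Function.iterate_succ_apply', ih, map_add]

lemma foldl_add {n : ℕ} (α : Fin n → ℕ) (l : List (Fin n)) :
    ∀ (P Q : MvPolynomial (Fin n) ℝ),
    l.foldl (fun Q i => (⇑(pderiv i))^[α i] Q) (P + Q)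
      = l.foldl (fun Q i => (⇑(pderiv i))^[α i] Q) P
        + l.foldl (fun Q i => (⇑(pderiv i))^[α i] Q) Q := by
  induction l with
  | nil => intro P Q; rfl
  | cons i l ih => intro P Q; rw [List.foldl_cons, pderiv_iterate_add, ih]; rfl

lemma mderiv_add {n : ℕ} (α : Fin n → ℕ) (P Q : MvPolynomial (Fin n) ℝ) :
    mderiv α (P + Q) = mderiv α P + mderiv α Q := foldl_add α _ P Q

lemma mderiv_zero {n : ℕ} (α : Fin n → ℕ) : mderiv α (0 : MvPolynomial (Fin n) ℝ) = 0 := by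
  have h : ∀ l : List (Fin n),
      l.foldl (fun Q i => (⇑(pderiv i))^[α i] Q) (0 : MvPolynomial (Fin n) ℝ) = 0 := by
    intro l
    induction l with
    | nil => rfl
    | cons i l ih =>
      rw [List.foldl_cons]
      have : (⇑(pderiv i))^[α i] (0 : MvPolynomial (Fin n) ℝ) = 0 := by
        induction (α i) with
        | zero => rfl
        | succ t iht => rw [Function.iterate_succ_apply', iht, map_zero]
      rw [this, ih]
  exact h _

/-- `mderiv` as an additive monoid hom. -/
noncomputable def mderivHom {n : ℕ} (α : Fin n → ℕ) :
    MvPolynomial (Fin n) ℝ →+ MvPolynomial (Fin n) ℝ :=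
  ⟨⟨mderiv α, mderiv_zero α⟩, mderiv_add α⟩

lemma mderiv_sub {n : ℕ} (α : Fin n → ℕ) (P Q : MvPolynomial (Fin n) ℝ) :
    mderiv α (P - Q) = mderiv α P - mderiv α Q :=
  map_sub (mderivHom α) P Q

lemma mderiv_sum {n : ℕ} (α : Fin n → ℕ) {ι : Type*} (s : Finset ι)
    (f : ι → MvPolynomial (Fin n) ℝ) :
    mderiv α (∑ i ∈ s, f i) = ∑ i ∈ s, mderiv α (f i) :=
  map_sum (mderivHom α) f s

lemma sumSingle_apply {n : ℕ} (α : Fin n → ℕ) (i : Fin n) :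
    (∑ j, Finsupp.single j (α j)) i = α i := by
  rw [Finsupp.finset_sum_apply]
  simp [Finsupp.single_apply]

lemma eval_monomial' {n : ℕ} (x : Fin n → ℝ) (e : Fin n →₀ ℕ) (c : ℝ) :
    eval x (monomial e c) = c * ∏ i, x i ^ (e i) := by
  rw [eval_monomial]
  congr 1
  exact Finsupp.prod_fintype _ _ (fun i => pow_zero (x i))

lemma mem_multiIndices {n m : ℕ} {β : Fin n → ℕ} :
    β ∈ multiIndices n m ↔ (∀ i, β i ≤ m) ∧ (∑ i, β i) ≤ m := by
  simp [multiIndices, Nat.lt_succ_iff]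

/-! ### Taylor expansion for `mderiv` -/

lemma taylor_monomial {n k : ℕ} (γ : Fin n →₀ ℕ) (c : ℝ) (hγ : ∑ i, γ i ≤ k)
    (α : Fin n → ℕ) (x y : Fin n → ℝ) :
    eval y (mderiv α (monomial γ c))
      = ∑ β ∈ multiIndices n (k - ∑ i, α i),
          eval x (mderiv (fun i => α i + β i) (monomial γ c))
            * ∏ i, ((y i - x i) ^ (β i) / ((β i).factorial : ℝ)) := by
  by_cases hcase : ∀ i, α i ≤ γ i
  · -- main case
    set M := k - ∑ i, α i with hM
    set δ : Fin n → ℕ := fun i => γ i - α i with hδ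
    have hδsum : (∑ i, δ i) + (∑ i, α i) = ∑ i, γ i := by
      rw [← Finset.sum_add_distrib]
      exact Finset.sum_congr rfl fun i _ => by simp only [hδ]; have := hcase i; omega
    have hδM : ∀ i, δ i ≤ M := by
      intro i
      have h1 : δ i ≤ ∑ j, δ j :=
        Finset.single_le_sum (f := δ) (fun j _ => Nat.zero_le _) (Finset.mem_univ i)
      omega
    set D : ℝ := ((∏ i, (γ i).descFactorial (α i) : ℕ) : ℝ) with hD
    set z : Fin n → ℝ := fun i => y i - x i with hz
    set g : Fin n → ℕ → ℝ := fun i b => ((δ i).choose b : ℝ) * x i ^ (δ i - b) * z i ^ b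
      with hg
    -- term rewrite
    have hterm : ∀ β : Fin n → ℕ,
        eval x (mderiv (fun i => α i + β i) (monomial γ c))
            * ∏ i, ((y i - x i) ^ (β i) / ((β i).factorial : ℝ))
          = c * D * ∏ i, g i (β i) := by
      intro β
      rw [mderiv_monomial, eval_monomial']
      have hexp : ∀ i, (γ - ∑ j, Finsupp.single j (α j + β j)) i
          = δ i - β i := by
        intro i
        rw [Finsupp.tsub_apply, sumSingle_apply (fun j => α j + β j)]
        have := hcase i; simp only [hδ]; omega
      have hdf : ∀ i, (γ i).descFactorial (α i + β i)
          = (γ i).descFactorial (α i) * ((δ i).descFactorial (β i)) := by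
        intro i
        have := Nat.descFactorial_mul_descFactorial (k := α i) (m := α i + β i) (n := γ i)
          (Nat.le_add_right _ _)
        rw [Nat.add_sub_cancel_left] at this
        rw [← this, mul_comm]
      simp only [hexp, hdf]
      push_cast
      rw [Finset.prod_mul_distrib]
      have hchoose : ∀ i, ((δ i).descFactorial (β i) : ℝ)
          = ((β i).factorial : ℝ) * ((δ i).choose (β i)) := by
        intro i; exact_mod_cast congrArg (Nat.cast (R := ℝ))
          (Nat.descFactorial_eq_factorial_mul_choose (δ i) (β i))
      simp only [hchoose, hg, hz]
      rw [Finset.prod_div_distrib, Finset.prod_mul_distrib, Finset.prod_mul_distrib,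
        Finset.prod_mul_distrib]
      have hfacne : (∏ i, ((β i).factorial : ℝ)) ≠ 0 :=
        Finset.prod_ne_zero_iff.2 fun i _ => Nat.cast_ne_zero.2 (Nat.factorial_ne_zero _)
      field_simp
      rw [hD]
      push_cast
      ring
    -- restrict sum
    have hsub : (Fintype.piFinset fun i => Finset.range (δ i + 1)) ⊆ multiIndices n M := by
      intro β hβ
      rw [Fintype.mem_piFinset] at hβ
      have hle : ∀ i, β i ≤ δ i := fun i => Nat.lt_succ_iff.1 (Finset.mem_range.1 (hβ i))
      rw [mem_multiIndices]
      constructor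
      · intro i; exact le_trans (hle i) (hδM i)
      · calc (∑ i, β i) ≤ ∑ i, δ i := Finset.sum_le_sum fun i _ => hle i
          _ ≤ M := by omega
    have hvanish : ∀ β ∈ multiIndices n M,
        β ∉ (Fintype.piFinset fun i => Finset.range (δ i + 1)) →
        c * D * ∏ i, g i (β i) = 0 := by
      intro β _ hβ
      rw [Fintype.mem_piFinset] at hβ
      push_neg at hβ
      obtain ⟨i0, hi0⟩ := hβ
      rw [Finset.mem_range] at hi0
      push_neg at hi0
      have : (δ i0).choose (β i0) = 0 := Nat.choose_eq_zero_of_lt (by omega)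
      have hz0 : g i0 (β i0) = 0 := by rw [hg]; simp [this]
      rw [Finset.prod_eq_zero (Finset.mem_univ i0) hz0, mul_zero]
    calc eval y (mderiv α (monomial γ c))
        = c * D * ∏ i, y i ^ δ i := by
          rw [mderiv_monomial, eval_monomial']
          congr 1
          refine Finset.prod_congr rfl fun i _ => ?_
          congr 1
          rw [Finsupp.tsub_apply, sumSingle_apply]
      _ = c * D * ∏ i, (∑ b ∈ Finset.range (δ i + 1), g i b) := by
          congr 1
          refine Finset.prod_congr rfl fun i _ => ?_
          have : y i = z i + x i := by rw [hz]; ring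
          rw [this, add_pow]
          refine Finset.sum_congr rfl fun b hb => ?_
          rw [hg]
          ring
      _ = ∑ β ∈ (Fintype.piFinset fun i => Finset.range (δ i + 1)), c * D * ∏ i, g i (β i) := by
          rw [Finset.prod_univ_sum, Finset.mul_sum]
      _ = ∑ β ∈ multiIndices n M, c * D * ∏ i, g i (β i) :=
          Finset.sum_subset hsub hvanish
      _ = _ := Finset.sum_congr rfl fun β _ => (hterm β).symm
  · -- degenerate case: some α i > γ i, both sides vanish
    push_neg at hcase
    obtain ⟨i0, hi0⟩ := hcase
    have hL : eval y (mderiv α (monomial γ c)) = 0 := by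
      rw [mderiv_monomial, eval_monomial']
      have : ((γ i0).descFactorial (α i0)) = 0 :=
        Nat.descFactorial_eq_zero_iff_lt.2 hi0
      rw [Finset.prod_eq_zero (Finset.mem_univ i0) this]
      simp
    have hR : ∀ β : Fin n → ℕ,
        eval x (mderiv (fun i => α i + β i) (monomial γ c)) = 0 := by
      intro β
      rw [mderiv_monomial, eval_monomial']
      have : ((γ i0).descFactorial (α i0 + β i0)) = 0 :=
        Nat.descFactorial_eq_zero_iff_lt.2 (by omega)
      rw [Finset.prod_eq_zero (Finset.mem_univ i0) this]
      simp
    rw [hL]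
    symm
    refine Finset.sum_eq_zero fun β _ => ?_
    rw [hR β, zero_mul]

lemma taylor_mderiv {n k : ℕ} (P : MvPolynomial (Fin n) ℝ) (hP : P.totalDegree ≤ k)
    (α : Fin n → ℕ) (x y : Fin n → ℝ) :
    eval y (mderiv α P)
      = ∑ β ∈ multiIndices n (k - ∑ i, α i),
          eval x (mderiv (fun i => α i + β i) P)
            * ∏ i, ((y i - x i) ^ (β i) / ((β i).factorial : ℝ)) := by
  conv_lhs => rw [P.as_sum]
  conv_rhs => rw [P.as_sum]
  rw [mderiv_sum, map_sum]
  have : ∀ β ∈ multiIndices n (k - ∑ i, α i),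
      eval x (mderiv (fun i => α i + β i) (∑ γ ∈ P.support, monomial γ (coeff γ P)))
          * ∏ i, ((y i - x i) ^ (β i) / ((β i).factorial : ℝ))
        = ∑ γ ∈ P.support, eval x (mderiv (fun i => α i + β i) (monomial γ (coeff γ P)))
            * ∏ i, ((y i - x i) ^ (β i) / ((β i).factorial : ℝ)) := by
    intro β _
    rw [mderiv_sum, map_sum, Finset.sum_mul]
  rw [Finset.sum_congr rfl this, Finset.sum_comm]
  refine Finset.sum_congr rfl fun γ hγ => ?_
  have hγk : ∑ i, γ i ≤ k := by
    have h1 := MvPolynomial.le_totalDegree hγ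
    have h2 : (γ.sum fun _ e => e) = ∑ i, γ i :=
      Finsupp.sum_fintype _ _ (fun i => rfl)
    omega
  exact taylor_monomial γ (coeff γ P) hγk α x y

section omegaFacts
variable {ω : ℝ → ℝ}
  (hnn : ∀ t, 0 ≤ t → 0 ≤ ω t)
  (hcont : ContinuousOn ω (Set.Ici 0))
  (hmono : StrictMonoOn ω (Set.Ici 0))
  (hconc : ConcaveOn ℝ (Set.Ici 0) ω)
  (h0 : ω 0 = 0)

include hmono h0 in
lemma omega_pos {t : ℝ} (ht : 0 < t) : 0 < ω t := by
  have := hmono (Set.self_mem_Ici) (le_of_lt ht : (0:ℝ) ≤ t) ht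
  rwa [h0] at this

include hconc h0 in
lemma omega_subadd {a b : ℝ} (ha : 0 ≤ a) (hb : 0 ≤ b) : ω (a + b) ≤ ω a + ω b := by
  rcases eq_or_lt_of_le (by positivity : (0:ℝ) ≤ a + b) with hs | hs
  · have ha0 : a = 0 := by linarith
    have hb0 : b = 0 := by linarith
    simp [ha0, hb0, h0]
  · have key : ∀ c : ℝ, 0 ≤ c → c ≤ a + b → (c / (a+b)) * ω (a+b) ≤ ω c := by
      intro c hc hcs
      have h2 := hconc.2 (Set.mem_Ici.2 (le_of_lt hs)) (Set.self_mem_Ici)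
        (by positivity : (0:ℝ) ≤ c / (a+b))
        (by
          have : c / (a+b) ≤ 1 := (div_le_one hs).2 hcs
          linarith : (0:ℝ) ≤ 1 - c / (a+b))
        (by ring)
      simp only [smul_eq_mul, h0, mul_zero, add_zero] at h2
      have he : c / (a+b) * (a+b) = c := by field_simp
      rwa [he] at h2
    have h1 := key a ha (by linarith)
    have h2 := key b hb (by linarith)
    have : (a / (a+b)) * ω (a+b) + (b / (a+b)) * ω (a+b) = ω (a+b) := by
      field_simp
    linarith

include hconc h0 in
lemma omega_sum_le {m : ℕ} (f : ℕ → ℝ) (hf : ∀ i, 0 ≤ f i) :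
    ω (∑ i ∈ Finset.range m, f i) ≤ ∑ i ∈ Finset.range m, ω (f i) := by
  induction m with
  | zero => simp [h0]
  | succ m ih =>
    rw [Finset.sum_range_succ, Finset.sum_range_succ]
    calc ω (∑ i ∈ Finset.range m, f i + f m)
        ≤ ω (∑ i ∈ Finset.range m, f i) + ω (f m) :=
          omega_subadd hconc h0 (Finset.sum_nonneg fun i _ => hf i) (hf m)
      _ ≤ _ := by linarith

include hnn hcont hmono h0 in
lemma psi_exists {m : ℕ} (hm : 1 ≤ m) {t : ℝ} (ht : 0 ≤ t) :
    ∃ s ∈ Set.Ici (0:ℝ), s ^ m * ω s = t := by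
  have hω1 : 0 < ω 1 := omega_pos hmono h0 one_pos
  set b : ℝ := max 1 (t / ω 1) with hb
  have hb1 : (1:ℝ) ≤ b := le_max_left _ _
  have hb0 : (0:ℝ) ≤ b := by linarith
  have hfb : t ≤ b ^ m * ω b := by
    have h1 : b ≤ b ^ m := le_self_pow₀ (by linarith) (by omega)
    have h2 : ω 1 ≤ ω b := hmono.monotoneOn (Set.mem_Ici.2 zero_le_one)
      (Set.mem_Ici.2 hb0) hb1
    have h3 : t / ω 1 * ω 1 ≤ b * ω b := by
      apply mul_le_mul (le_max_right _ _) h2 (le_of_lt hω1) hb0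
    have h4 : b * ω b ≤ b ^ m * ω b := by
      apply mul_le_mul_of_nonneg_right h1 (hnn b hb0)
    rw [div_mul_cancel₀ _ (ne_of_gt hω1)] at h3
    linarith
  have hcont' : ContinuousOn (fun s => s ^ m * ω s) (Set.Icc 0 b) :=
    ((continuous_pow m).continuousOn).mul (hcont.mono Set.Icc_subset_Ici_self)
  have hIVT := intermediate_value_Icc hb0 hcont'
  have hf0 : (fun s => s ^ m * ω s) 0 = 0 := by
    simp [h0]
  have htmem : t ∈ Set.Icc ((fun s => s ^ m * ω s) 0) ((fun s => s ^ m * ω s) b) := by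
    rw [hf0]; exact ⟨ht, hfb⟩
  obtain ⟨s, hs, hfs⟩ := hIVT htmem
  exact ⟨s, Set.mem_Ici.2 hs.1, hfs⟩

include hnn hcont hmono h0 in
lemma psiInv_spec {m : ℕ} (hm : 1 ≤ m) {t : ℝ} (ht : 0 ≤ t) :
    0 ≤ psiInv ω m t ∧ (psiInv ω m t) ^ m * ω (psiInv ω m t) = t := by
  have h := psi_exists hnn hcont hmono h0 hm ht
  exact ⟨Function.invFunOn_mem h, Function.invFunOn_eq h⟩

include hnn hcont hmono h0 in
lemma phi_bound {m : ℕ} (hm : 1 ≤ m) {A S ρ t : ℝ} (hA : 1 ≤ A) (hS : 0 ≤ S)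
    (hρ : 0 ≤ ρ) (ht : 0 ≤ t) (hωρ : ω ρ ≤ S) (htb : t ≤ A * ρ ^ m * S) :
    ω (psiInv ω m t) ≤ A * S := by
  obtain ⟨hu0, hψu⟩ := psiInv_spec hnn hcont hmono h0 hm ht
  set u := psiInv ω m t with hu
  by_contra hcon
  push_neg at hcon
  have hAS : 0 ≤ A * S := by positivity
  have hρu : ρ < u := by
    by_contra hle
    push_neg at hle
    have : ω u ≤ ω ρ := hmono.monotoneOn (Set.mem_Ici.2 hu0) (Set.mem_Ici.2 hρ) hle
    have : ω u ≤ A * S := le_trans this (le_trans hωρ (le_mul_of_one_le_left hS hA))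
    linarith
  have hupos : 0 < u := lt_of_le_of_lt hρ hρu
  rcases eq_or_lt_of_le hρ with hρ0 | hρ0
  · have : t ≤ 0 := by
      rw [← hρ0] at htb
      rw [zero_pow (by omega : m ≠ 0)] at htb
      linarith [htb]
    have ht0 : t = 0 := le_antisymm this ht
    rw [ht0] at hψu
    have h1 : 0 < u ^ m := pow_pos hupos m
    have h2 : 0 < ω u := lt_of_le_of_lt hAS hcon
    nlinarith
  · have h1 : ρ ^ m * (A * S) < ρ ^ m * ω u :=
      mul_lt_mul_of_pos_left hcon (pow_pos hρ0 m)
    have h2 : ρ ^ m * ω u ≤ u ^ m * ω u :=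
      mul_le_mul_of_nonneg_right (pow_le_pow_left₀ hρ (le_of_lt hρu) m)
        (hnn u hu0)
    nlinarith
end omegaFacts

/-! ### Misc analytic lemmas -/

lemma coord_le_norm {n : ℕ} (v : EuclideanSpace ℝ (Fin n)) (j : Fin n) :
    |v j| ≤ ‖v‖ := by
  rw [EuclideanSpace.norm_eq]
  have h1 : |v j| = Real.sqrt ((v j) ^ 2) := (Real.sqrt_sq_eq_abs _).symm
  rw [h1]
  apply Real.sqrt_le_sqrt
  calc (v j) ^ 2 = ‖v j‖ ^ 2 := by rw [Real.norm_eq_abs, sq_abs]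
    _ ≤ ∑ i, ‖v i‖ ^ 2 :=
      Finset.single_le_sum (fun i _ => sq_nonneg ‖v i‖) (Finset.mem_univ j)

lemma prodInvFact_le_exp (n M : ℕ) :
    ∑ β ∈ multiIndices n M, ∏ j, (1 / (((β j).factorial : ℝ)))
      ≤ Real.exp n := by
  have h1 : ∑ β ∈ multiIndices n M, ∏ j, (1 / (((β j).factorial : ℝ)))
      ≤ ∑ β ∈ (Fintype.piFinset fun _ : Fin n => Finset.range (M + 1)),
          ∏ j, (1 / (((β j).factorial : ℝ))) := by
    apply Finset.sum_le_sum_of_subset_of_nonneg (Finset.filter_subset _ _)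
    intro β _ _
    exact Finset.prod_nonneg fun j _ => by positivity
  have h2 : ∑ β ∈ (Fintype.piFinset fun _ : Fin n => Finset.range (M + 1)),
      ∏ j, (1 / (((β j).factorial : ℝ)))
      = ∏ _j : Fin n, ∑ b ∈ Finset.range (M + 1), (1 / ((b.factorial : ℝ))) :=
    (Finset.prod_univ_sum (fun _ : Fin n => Finset.range (M + 1))
      (fun _ b => (1 / ((b.factorial : ℝ))))).symm
  have h3 : ∑ b ∈ Finset.range (M + 1), (1 / ((b.factorial : ℝ))) ≤ Real.exp 1 := by
    have h := Real.sum_le_exp_of_nonneg (zero_le_one) (M + 1)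
    simpa using h
  calc ∑ β ∈ multiIndices n M, ∏ j, (1 / (((β j).factorial : ℝ)))
      ≤ ∏ _j : Fin n, ∑ b ∈ Finset.range (M + 1), (1 / ((b.factorial : ℝ))) := by
        rw [← h2]; exact h1
    _ ≤ ∏ _j : Fin n, Real.exp 1 :=
        Finset.prod_le_prod (fun _ _ => Finset.sum_nonneg fun b _ => by positivity)
          (fun _ _ => h3)
    _ = Real.exp n := by
        rw [Finset.prod_const, Finset.card_univ, Fintype.card_fin, ← Real.exp_nat_mul,
          mul_one]


/-! ### Elementary facts about `dOm` -/

lemma zero_mem_multiIndices (n k : ℕ) : (fun _ : Fin n => 0) ∈ multiIndices n k := by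
  simp [multiIndices]

lemma le_dOm_norm {n k : ℕ} (ω : ℝ → ℝ)
    (T T' : MvPolynomial (Fin n) ℝ × EuclideanSpace ℝ (Fin n)) :
    ω ‖T.2 - T'.2‖ ≤ dOm ω k T T' :=
  le_trans (le_max_left _ _) (Finset.le_sup'
    (fun α => max (ω ‖T.2 - T'.2‖)
      (max (phiOm ω k (∑ i, α i)
              |MvPolynomial.eval (fun i => T.2 i) (mderiv α (T.1 - T'.1))|)
           (phiOm ω k (∑ i, α i)
              |MvPolynomial.eval (fun i => T'.2 i) (mderiv α (T.1 - T'.1))|)))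
    (zero_mem_multiIndices n k))

lemma le_dOm_phi_fst {n k : ℕ} (ω : ℝ → ℝ) {γ : Fin n → ℕ} (hγ : γ ∈ multiIndices n k)
    (T T' : MvPolynomial (Fin n) ℝ × EuclideanSpace ℝ (Fin n)) :
    phiOm ω k (∑ i, γ i) |eval (fun i => T.2 i) (mderiv γ (T.1 - T'.1))| ≤ dOm ω k T T' :=
  le_trans (le_trans (le_max_left _ _) (le_max_right _ _)) (Finset.le_sup'
    (fun α => max (ω ‖T.2 - T'.2‖)
      (max (phiOm ω k (∑ i, α i)
              |MvPolynomial.eval (fun i => T.2 i) (mderiv α (T.1 - T'.1))|)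
           (phiOm ω k (∑ i, α i)
              |MvPolynomial.eval (fun i => T'.2 i) (mderiv α (T.1 - T'.1))|))) hγ)

lemma le_dOm_phi_snd {n k : ℕ} (ω : ℝ → ℝ) {γ : Fin n → ℕ} (hγ : γ ∈ multiIndices n k)
    (T T' : MvPolynomial (Fin n) ℝ × EuclideanSpace ℝ (Fin n)) :
    phiOm ω k (∑ i, γ i) |eval (fun i => T'.2 i) (mderiv γ (T.1 - T'.1))| ≤ dOm ω k T T' :=
  le_trans (le_trans (le_max_right _ _) (le_max_right _ _)) (Finset.le_sup'
    (fun α => max (ω ‖T.2 - T'.2‖)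
      (max (phiOm ω k (∑ i, α i)
              |MvPolynomial.eval (fun i => T.2 i) (mderiv α (T.1 - T'.1))|)
           (phiOm ω k (∑ i, α i)
              |MvPolynomial.eval (fun i => T'.2 i) (mderiv α (T.1 - T'.1))|))) hγ)

lemma dOm_nonneg {n k : ℕ} {ω : ℝ → ℝ} (hnn : ∀ t, 0 ≤ t → 0 ≤ ω t)
    (T T' : MvPolynomial (Fin n) ℝ × EuclideanSpace ℝ (Fin n)) :
    0 ≤ dOm ω k T T' :=
  le_trans (hnn _ (norm_nonneg _)) (le_dOm_norm ω T T')

/-! ### The chain bound -/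

lemma chain_bound {n k : ℕ} (hk : 1 ≤ k) (ω : ℝ → ℝ)
    (hnn : ∀ t, 0 ≤ t → 0 ≤ ω t)
    (hcont : ContinuousOn ω (Set.Ici 0))
    (hmono : StrictMonoOn ω (Set.Ici 0))
    (hconc : ConcaveOn ℝ (Set.Ici 0) ω)
    (h0 : ω 0 = 0)
    (m : ℕ) (c : ℕ → MvPolynomial (Fin n) ℝ × EuclideanSpace ℝ (Fin n))
    (hdeg : ∀ i ≤ m, (c i).1.totalDegree ≤ k) :
    dOm ω k (c 0) (c m) ≤ Real.exp n * ∑ i ∈ Finset.range m, dOm ω k (c i) (c (i + 1)) := by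
  set d : ℕ → ℝ := fun i => dOm ω k (c i) (c (i + 1)) with hd
  set S : ℝ := ∑ i ∈ Finset.range m, d i with hS
  have hd0 : ∀ i, 0 ≤ d i := fun i => dOm_nonneg hnn _ _
  have hS0 : 0 ≤ S := Finset.sum_nonneg fun i _ => hd0 i
  set r : ℕ → ℝ := fun i => max ‖(c i).2 - (c (i + 1)).2‖
    ((multiIndices n k).sup' (multiIndices_nonempty n k) (fun γ =>
      if (∑ j, γ j) < k then
        max (psiInv ω (k - ∑ j, γ j)
              |eval (fun j => (c i).2 j) (mderiv γ ((c i).1 - (c (i + 1)).1))|)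
            (psiInv ω (k - ∑ j, γ j)
              |eval (fun j => (c (i + 1)).2 j) (mderiv γ ((c i).1 - (c (i + 1)).1))|)
      else 0)) with hr
  have hr0 : ∀ i, 0 ≤ r i := fun i => le_trans (norm_nonneg _) (le_max_left _ _)
  have hnormr : ∀ i, ‖(c i).2 - (c (i + 1)).2‖ ≤ r i := fun i => le_max_left _ _
  have hur : ∀ i, ∀ γ ∈ multiIndices n k, (∑ j, γ j) < k →
      psiInv ω (k - ∑ j, γ j)
          |eval (fun j => (c i).2 j) (mderiv γ ((c i).1 - (c (i + 1)).1))| ≤ r i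
        ∧ psiInv ω (k - ∑ j, γ j)
          |eval (fun j => (c (i + 1)).2 j) (mderiv γ ((c i).1 - (c (i + 1)).1))| ≤ r i := by
    intro i γ hγ hlt
    have h1 := Finset.le_sup' (f := (fun γ =>
      if (∑ j, γ j) < k then
        max (psiInv ω (k - ∑ j, γ j)
              |eval (fun j => (c i).2 j) (mderiv γ ((c i).1 - (c (i + 1)).1))|)
            (psiInv ω (k - ∑ j, γ j)
              |eval (fun j => (c (i + 1)).2 j) (mderiv γ ((c i).1 - (c (i + 1)).1))|)
      else 0)) hγ
    rw [if_pos hlt] at h1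
    constructor
    · exact le_trans (le_trans (le_max_left _ _) h1) (le_max_right _ _)
    · exact le_trans (le_trans (le_max_right _ _) h1) (le_max_right _ _)
  have hωr : ∀ i, ω (r i) ≤ d i := by
    intro i
    rcases max_choice ‖(c i).2 - (c (i + 1)).2‖
      ((multiIndices n k).sup' (multiIndices_nonempty n k) (fun γ =>
        if (∑ j, γ j) < k then
          max (psiInv ω (k - ∑ j, γ j)
                |eval (fun j => (c i).2 j) (mderiv γ ((c i).1 - (c (i + 1)).1))|)
              (psiInv ω (k - ∑ j, γ j)
                |eval (fun j => (c (i + 1)).2 j) (mderiv γ ((c i).1 - (c (i + 1)).1))|)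
        else 0)) with hc1 | hc1
    · have : r i = ‖(c i).2 - (c (i + 1)).2‖ := hc1
      rw [this]
      exact le_dOm_norm ω _ _
    · obtain ⟨γ0, hγ0, hbeq⟩ := Finset.exists_mem_eq_sup' (multiIndices_nonempty n k)
        (fun γ =>
          if (∑ j, γ j) < k then
            max (psiInv ω (k - ∑ j, γ j)
                  |eval (fun j => (c i).2 j) (mderiv γ ((c i).1 - (c (i + 1)).1))|)
                (psiInv ω (k - ∑ j, γ j)
                  |eval (fun j => (c (i + 1)).2 j) (mderiv γ ((c i).1 - (c (i + 1)).1))|)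
          else 0)
      have hri : r i = _ := hc1
      rw [hri, hbeq]
      by_cases hlt : (∑ j, γ0 j) < k
      · rw [if_pos hlt]
        rcases max_choice (psiInv ω (k - ∑ j, γ0 j)
              |eval (fun j => (c i).2 j) (mderiv γ0 ((c i).1 - (c (i + 1)).1))|)
            (psiInv ω (k - ∑ j, γ0 j)
              |eval (fun j => (c (i + 1)).2 j) (mderiv γ0 ((c i).1 - (c (i + 1)).1))|)
          with hc2 | hc2 <;> rw [hc2]
        · have hphi : phiOm ω k (∑ j, γ0 j)
              |eval (fun j => (c i).2 j) (mderiv γ0 ((c i).1 - (c (i + 1)).1))|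
              = ω (psiInv ω (k - ∑ j, γ0 j)
                  |eval (fun j => (c i).2 j) (mderiv γ0 ((c i).1 - (c (i + 1)).1))|) := by
            rw [phiOm, if_pos hlt]
          rw [← hphi]
          exact le_dOm_phi_fst ω hγ0 _ _
        · have hphi : phiOm ω k (∑ j, γ0 j)
              |eval (fun j => (c (i + 1)).2 j) (mderiv γ0 ((c i).1 - (c (i + 1)).1))|
              = ω (psiInv ω (k - ∑ j, γ0 j)
                  |eval (fun j => (c (i + 1)).2 j) (mderiv γ0 ((c i).1 - (c (i + 1)).1))|) := by
            rw [phiOm, if_pos hlt]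
          rw [← hphi]
          exact le_dOm_phi_snd ω hγ0 _ _
      · rw [if_neg hlt, h0]
        exact hd0 i
  set ρ : ℝ := ∑ j ∈ Finset.range m, r j with hρdef
  have hρ0 : 0 ≤ ρ := Finset.sum_nonneg fun j _ => hr0 j
  have hrρ : ∀ i, i < m → r i ≤ ρ := fun i hi =>
    Finset.single_le_sum (fun j _ => hr0 j) (Finset.mem_range.2 hi)
  have hωρS : ω ρ ≤ S :=
    le_trans (omega_sum_le hconc h0 r hr0)
      (Finset.sum_le_sum fun i _ => hωr i)
  have hdist : ∀ p q, p ≤ q → q ≤ m → ‖(c p).2 - (c q).2‖ ≤ ρ := by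
    intro p q hpq hqm
    have h1 := dist_le_range_sum_dist (fun j => (c (p + j)).2) (q - p)
    calc ‖(c p).2 - (c q).2‖ = dist ((c p).2) ((c q).2) := (dist_eq_norm _ _).symm
      _ ≤ ∑ j ∈ Finset.range (q - p), dist ((c (p + j)).2) ((c (p + j + 1)).2) := by
          have hpq' : p + (q - p) = q := Nat.add_sub_cancel' hpq
          simpa [hpq', Nat.add_assoc] using h1
      _ ≤ ∑ j ∈ Finset.range (q - p), r (p + j) := by
          refine Finset.sum_le_sum fun j hj => ?_
          rw [dist_eq_norm]
          exact hnormr (p + j)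
      _ = ∑ t ∈ Finset.Ico p q, r t := by
          rw [Finset.sum_Ico_eq_sum_range]
      _ ≤ ρ := by
          refine Finset.sum_le_sum_of_subset_of_nonneg ?_ (fun t _ _ => hr0 t)
          intro t ht
          rw [Finset.mem_Ico] at ht
          rw [Finset.mem_range]
          omega
  have hkey : ∀ i, i < m → ∀ γ ∈ multiIndices n k, ∀ t : ℝ, 0 ≤ t →
      phiOm ω k (∑ j, γ j) t ≤ d i →
      ((∑ j, γ j) < k → psiInv ω (k - ∑ j, γ j) t ≤ r i) →
      t ≤ ρ ^ (k - ∑ j, γ j) * d i := by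
    intro i him γ hγ t ht hphi hpsi
    by_cases hlt : (∑ j, γ j) < k
    · have hM1 : 1 ≤ k - ∑ j, γ j := by omega
      obtain ⟨hu0, hψ⟩ := psiInv_spec hnn hcont hmono h0 hM1 ht
      have hur' : psiInv ω (k - ∑ j, γ j) t ≤ r i := hpsi hlt
      have huρ : psiInv ω (k - ∑ j, γ j) t ≤ ρ := le_trans hur' (hrρ i him)
      have hωu : ω (psiInv ω (k - ∑ j, γ j) t) ≤ d i := by
        calc ω (psiInv ω (k - ∑ j, γ j) t) ≤ ω (r i) :=
              hmono.monotoneOn (Set.mem_Ici.2 hu0)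
                (Set.mem_Ici.2 (hr0 i)) hur'
          _ ≤ d i := hωr i
      calc t = (psiInv ω (k - ∑ j, γ j) t) ^ (k - ∑ j, γ j)
              * ω (psiInv ω (k - ∑ j, γ j) t) := hψ.symm
        _ ≤ ρ ^ (k - ∑ j, γ j) * d i := by
            apply mul_le_mul (pow_le_pow_left₀ hu0 huρ _) hωu (hnn _ hu0)
              (pow_nonneg hρ0 _)
    · have hak : (∑ j, γ j) = k := le_antisymm (mem_multiIndices.1 hγ).2 (not_lt.1 hlt)
      have : k - ∑ j, γ j = 0 := by omega
      rw [this, pow_zero, one_mul]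
      have hphi' : phiOm ω k (∑ j, γ j) t = t := by rw [phiOm, if_neg hlt]
      rwa [hphi'] at hphi
  have hkey1 : ∀ i, i < m → ∀ γ ∈ multiIndices n k,
      |eval (fun j => (c i).2 j) (mderiv γ ((c i).1 - (c (i + 1)).1))|
        ≤ ρ ^ (k - ∑ j, γ j) * d i :=
    fun i hi γ hγ => hkey i hi γ hγ _ (abs_nonneg _) (le_dOm_phi_fst ω hγ _ _)
      (fun hlt => (hur i γ hγ hlt).1)
  have hkey2 : ∀ i, i < m → ∀ γ ∈ multiIndices n k,
      |eval (fun j => (c (i + 1)).2 j) (mderiv γ ((c i).1 - (c (i + 1)).1))|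
        ≤ ρ ^ (k - ∑ j, γ j) * d i :=
    fun i hi γ hγ => hkey i hi γ hγ _ (abs_nonneg _) (le_dOm_phi_snd ω hγ _ _)
      (fun hlt => (hur i γ hγ hlt).2)
  -- master estimate
  have master : ∀ (E : EuclideanSpace ℝ (Fin n)) (z : ℕ → EuclideanSpace ℝ (Fin n)),
      (∀ i, i < m → ∀ γ ∈ multiIndices n k,
        |eval (fun j => (z i) j) (mderiv γ ((c i).1 - (c (i + 1)).1))|
          ≤ ρ ^ (k - ∑ j, γ j) * d i) →
      (∀ i, i < m → ∀ j, |E j - (z i) j| ≤ ρ) →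
      ∀ α ∈ multiIndices n k,
        |eval (fun j => E j) (mderiv α ((c 0).1 - (c m).1))|
          ≤ Real.exp n * (ρ ^ (k - ∑ j, α j) * S) := by
    intro E z hder hcoord α hα
    have htel : (c 0).1 - (c m).1 = ∑ i ∈ Finset.range m, ((c i).1 - (c (i + 1)).1) :=
      (Finset.sum_range_sub' (fun i => (c i).1) m).symm
    rw [htel, mderiv_sum, map_sum]
    have hper : ∀ i ∈ Finset.range m,
        |eval (fun j => E j) (mderiv α ((c i).1 - (c (i + 1)).1))|
          ≤ (ρ ^ (k - ∑ j, α j) * d i) * Real.exp n := by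
      intro i hi
      have him : i < m := Finset.mem_range.1 hi
      have hdegΔ : ((c i).1 - (c (i + 1)).1).totalDegree ≤ k :=
        le_trans (MvPolynomial.totalDegree_sub _ _)
          (max_le (hdeg i (by omega)) (hdeg (i + 1) (by omega)))
      rw [taylor_mderiv _ hdegΔ α (fun j => (z i) j) (fun j => E j)]
      have hperβ : ∀ β ∈ multiIndices n (k - ∑ j, α j),
          |eval (fun j => (z i) j) (mderiv (fun j => α j + β j) ((c i).1 - (c (i + 1)).1))
              * ∏ j, ((E j - (z i) j) ^ (β j) / ((β j).factorial : ℝ))|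
            ≤ (ρ ^ (k - ∑ j, α j) * d i) * ∏ j, (1 / (((β j).factorial : ℝ))) := by
        intro β hβ
        obtain ⟨hβc, hβs⟩ := mem_multiIndices.1 hβ
        have hsum : ∑ j, (α j + β j) = (∑ j, α j) + ∑ j, β j := Finset.sum_add_distrib
        have hαk : (∑ j, α j) ≤ k := (mem_multiIndices.1 hα).2
        have hαβ : (fun j => α j + β j) ∈ multiIndices n k := by
          rw [mem_multiIndices]
          have hsk : (∑ j, (α j + β j)) ≤ k := by rw [hsum]; omega
          exact ⟨fun j0 => le_trans (Finset.single_le_sum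
            (f := fun j => α j + β j) (fun _ _ => Nat.zero_le _) (Finset.mem_univ j0)) hsk,
            hsk⟩
        have hd1 := hder i him _ hαβ
        have hexp : k - (∑ j, (α j + β j)) = (k - ∑ j, α j) - ∑ j, β j := by
          rw [hsum]; omega
        rw [hexp] at hd1
        have hP : |∏ j, ((E j - (z i) j) ^ (β j) / ((β j).factorial : ℝ))|
            ≤ ρ ^ (∑ j, β j) * ∏ j, (1 / (((β j).factorial : ℝ))) := by
          rw [Finset.abs_prod]
          have hfac : ∀ j : Fin n,
              |(E j - (z i) j) ^ (β j) / ((β j).factorial : ℝ)|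
                = |E j - (z i) j| ^ (β j) * (1 / (((β j).factorial : ℝ))) := by
            intro j
            rw [abs_div, abs_pow, Nat.abs_cast, div_eq_mul_one_div]
          rw [Finset.prod_congr rfl (fun j _ => hfac j)]
          rw [Finset.prod_mul_distrib]
          apply mul_le_mul_of_nonneg_right
          · calc ∏ j, |E j - (z i) j| ^ (β j)
                ≤ ∏ j, ρ ^ (β j) :=
                  Finset.prod_le_prod (fun j _ => pow_nonneg (abs_nonneg _) _)
                    (fun j _ => pow_le_pow_left₀ (abs_nonneg _) (hcoord i him j) _)
              _ = ρ ^ (∑ j, β j) := Finset.prod_pow_eq_pow_sum _ _ _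
          · exact Finset.prod_nonneg fun j _ => by positivity
        calc |eval (fun j => (z i) j)
                (mderiv (fun j => α j + β j) ((c i).1 - (c (i + 1)).1))
              * ∏ j, ((E j - (z i) j) ^ (β j) / ((β j).factorial : ℝ))|
            = |eval (fun j => (z i) j)
                (mderiv (fun j => α j + β j) ((c i).1 - (c (i + 1)).1))|
              * |∏ j, ((E j - (z i) j) ^ (β j) / ((β j).factorial : ℝ))| := abs_mul _ _
          _ ≤ (ρ ^ ((k - ∑ j, α j) - ∑ j, β j) * d i)
              * (ρ ^ (∑ j, β j) * ∏ j, (1 / (((β j).factorial : ℝ)))) :=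
              mul_le_mul hd1 hP (abs_nonneg _)
                (mul_nonneg (pow_nonneg hρ0 _) (hd0 i))
          _ = (ρ ^ (k - ∑ j, α j) * d i) * ∏ j, (1 / (((β j).factorial : ℝ))) := by
              have hpow : ρ ^ ((k - ∑ j, α j) - ∑ j, β j) * ρ ^ (∑ j, β j)
                  = ρ ^ (k - ∑ j, α j) := by
                rw [← pow_add]
                congr 1
                omega
              rw [← hpow]
              ring
      calc |∑ β ∈ multiIndices n (k - ∑ j, α j),
              eval (fun j => (z i) j)
                (mderiv (fun j => α j + β j) ((c i).1 - (c (i + 1)).1))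
              * ∏ j, ((E j - (z i) j) ^ (β j) / ((β j).factorial : ℝ))|
          ≤ ∑ β ∈ multiIndices n (k - ∑ j, α j),
              |eval (fun j => (z i) j)
                (mderiv (fun j => α j + β j) ((c i).1 - (c (i + 1)).1))
              * ∏ j, ((E j - (z i) j) ^ (β j) / ((β j).factorial : ℝ))| :=
            Finset.abs_sum_le_sum_abs _ _
        _ ≤ ∑ β ∈ multiIndices n (k - ∑ j, α j),
              (ρ ^ (k - ∑ j, α j) * d i) * ∏ j, (1 / (((β j).factorial : ℝ))) :=
            Finset.sum_le_sum hperβ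
        _ = (ρ ^ (k - ∑ j, α j) * d i)
              * ∑ β ∈ multiIndices n (k - ∑ j, α j), ∏ j, (1 / (((β j).factorial : ℝ))) :=
            (Finset.mul_sum _ _ _).symm
        _ ≤ (ρ ^ (k - ∑ j, α j) * d i) * Real.exp n :=
            mul_le_mul_of_nonneg_left (prodInvFact_le_exp n _)
              (mul_nonneg (pow_nonneg hρ0 _) (hd0 i))
    calc |∑ i ∈ Finset.range m,
            eval (fun j => E j) (mderiv α ((c i).1 - (c (i + 1)).1))|
        ≤ ∑ i ∈ Finset.range m,
            |eval (fun j => E j) (mderiv α ((c i).1 - (c (i + 1)).1))| :=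
          Finset.abs_sum_le_sum_abs _ _
      _ ≤ ∑ i ∈ Finset.range m, (ρ ^ (k - ∑ j, α j) * d i) * Real.exp n :=
          Finset.sum_le_sum hper
      _ = Real.exp n * (ρ ^ (k - ∑ j, α j) * S) := by
          rw [hS, Finset.mul_sum, Finset.mul_sum]
          exact Finset.sum_congr rfl fun i _ => by ring
  -- conclusion
  have hcoord1 : ∀ i, i < m → ∀ j, |(c 0).2 j - (c i).2 j| ≤ ρ := by
    intro i hi j
    have h1 := hdist 0 i (Nat.zero_le _) (le_of_lt hi)
    have h2 := coord_le_norm ((c 0).2 - (c i).2) j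
    exact le_trans (le_of_eq (by norm_num)) (le_trans h2 h1)
  have hcoord2 : ∀ i, i < m → ∀ j, |(c m).2 j - (c (i + 1)).2 j| ≤ ρ := by
    intro i hi j
    have h1 := hdist (i + 1) m hi le_rfl
    rw [← norm_sub_rev] at h1
    have h2 := coord_le_norm ((c m).2 - (c (i + 1)).2) j
    exact le_trans (le_of_eq (by norm_num)) (le_trans h2 h1)
  have hm1 := master (c 0).2 (fun i => (c i).2) hkey1 hcoord1
  have hm2 := master (c m).2 (fun i => (c (i + 1)).2) hkey2 hcoord2
  have hone : (1:ℝ) ≤ Real.exp n := Real.one_le_exp (Nat.cast_nonneg n)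
  rw [dOm]
  apply Finset.sup'_le
  intro α hα
  refine max_le ?_ (max_le ?_ ?_)
  · calc ω ‖(c 0).2 - (c m).2‖ ≤ ω ρ :=
        hmono.monotoneOn (Set.mem_Ici.2 (norm_nonneg _)) (Set.mem_Ici.2 hρ0)
          (hdist 0 m (Nat.zero_le _) le_rfl)
      _ ≤ S := hωρS
      _ ≤ Real.exp n * S := le_mul_of_one_le_left hS0 hone
  · have hm1' := hm1 α hα
    by_cases hlt : (∑ j, α j) < k
    · have hphi : phiOm ω k (∑ j, α j)
          |eval (fun j => (c 0).2 j) (mderiv α ((c 0).1 - (c m).1))|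
          = ω (psiInv ω (k - ∑ j, α j)
              |eval (fun j => (c 0).2 j) (mderiv α ((c 0).1 - (c m).1))|) := by
        rw [phiOm, if_pos hlt]
      rw [hphi]
      exact phi_bound hnn hcont hmono h0 (by omega : 1 ≤ k - ∑ j, α j) hone hS0 hρ0
        (abs_nonneg _) hωρS (by linarith [hm1'] : _ ≤ Real.exp n * ρ ^ (k - ∑ j, α j) * S)
    · have hphi : phiOm ω k (∑ j, α j)
          |eval (fun j => (c 0).2 j) (mderiv α ((c 0).1 - (c m).1))|
          = |eval (fun j => (c 0).2 j) (mderiv α ((c 0).1 - (c m).1))| := by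
        rw [phiOm, if_neg hlt]
      rw [hphi]
      have hz : k - (∑ j, α j) = 0 := by
        have := (mem_multiIndices.1 hα).2; omega
      rw [hz, pow_zero, one_mul] at hm1'
      exact hm1'
  · have hm2' := hm2 α hα
    by_cases hlt : (∑ j, α j) < k
    · have hphi : phiOm ω k (∑ j, α j)
          |eval (fun j => (c m).2 j) (mderiv α ((c 0).1 - (c m).1))|
          = ω (psiInv ω (k - ∑ j, α j)
              |eval (fun j => (c m).2 j) (mderiv α ((c 0).1 - (c m).1))|) := by
        rw [phiOm, if_pos hlt]
      rw [hphi]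
      exact phi_bound hnn hcont hmono h0 (by omega : 1 ≤ k - ∑ j, α j) hone hS0 hρ0
        (abs_nonneg _) hωρS (by linarith [hm2'] : _ ≤ Real.exp n * ρ ^ (k - ∑ j, α j) * S)
    · have hphi : phiOm ω k (∑ j, α j)
          |eval (fun j => (c m).2 j) (mderiv α ((c 0).1 - (c m).1))|
          = |eval (fun j => (c m).2 j) (mderiv α ((c 0).1 - (c m).1))| := by
        rw [phiOm, if_neg hlt]
      rw [hphi]
      have hz : k - (∑ j, α j) = 0 := by
        have := (mem_multiIndices.1 hα).2; omega
      rw [hz, pow_zero, one_mul] at hm2'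
      exact hm2'

/-- Proposition 2.4(i): `e^{−n} d_ω(T,T') ≤ δ_ω(T,T') ≤ d_ω(T,T')`. -/
theorem delOm_equiv_dOm {n k : ℕ} (hk : 1 ≤ k)
    (ω : ℝ → ℝ)
    (hnn : ∀ t, 0 ≤ t → 0 ≤ ω t)
    (hcont : ContinuousOn ω (Set.Ici 0))
    (hmono : StrictMonoOn ω (Set.Ici 0))
    (hconc : ConcaveOn ℝ (Set.Ici 0) ω)
    (h0 : ω 0 = 0)
    (T T' : MvPolynomial (Fin n) ℝ × EuclideanSpace ℝ (Fin n))
    (hT : T.1.totalDegree ≤ k) (hT' : T'.1.totalDegree ≤ k) :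
    Real.exp (-(n : ℝ)) * dOm ω k T T' ≤ delOm ω k T T' ∧
      delOm ω k T T' ≤ dOm ω k T T' := by
  set A := { r | ∃ (m : ℕ) (c : ℕ → MvPolynomial (Fin n) ℝ × EuclideanSpace ℝ (Fin n)),
    c 0 = T ∧ c m = T' ∧ (∀ i ≤ m, (c i).1.totalDegree ≤ k) ∧
    r = ∑ i ∈ Finset.range m, dOm ω k (c i) (c (i + 1)) } with hA
  have hmem : dOm ω k T T' ∈ A := by
    refine ⟨1, fun i => if i = 0 then T else T', by simp, by simp, ?_, ?_⟩
    · intro i hi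
      by_cases h : i = 0
      · simp [h, hT]
      · simp [h, hT']
    · rw [Finset.sum_range_one]
      norm_num
  have hne : A.Nonempty := ⟨_, hmem⟩
  have hbdd : BddBelow A := by
    refine ⟨0, ?_⟩
    rintro r ⟨m, c, _, _, _, rfl⟩
    exact Finset.sum_nonneg fun i _ => dOm_nonneg hnn _ _
  constructor
  · rw [delOm]
    apply le_csInf hne
    rintro r ⟨m, c, hc0, hcm, hdeg, rfl⟩
    have hchain := chain_bound hk ω hnn hcont hmono hconc h0 m c hdeg
    rw [hc0, hcm] at hchain
    calc Real.exp (-(n : ℝ)) * dOm ω k T T'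
        ≤ Real.exp (-(n : ℝ))
            * (Real.exp n * ∑ i ∈ Finset.range m, dOm ω k (c i) (c (i + 1))) :=
          mul_le_mul_of_nonneg_left hchain (Real.exp_pos _).le
      _ = ∑ i ∈ Finset.range m, dOm ω k (c i) (c (i + 1)) := by
          rw [← mul_assoc, ← Real.exp_add]
          simp
  · rw [delOm]
    exact csInf_le hbdd hmem
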